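/- Let α₂ ∈ (0, 3/20] and α₁ = 1 − 2α₂ (so α₁, α₂ > 0 and α₁ + 2α₂ = 1), and let η be the probability measure on ((√2−1)², (√2+1)²) with density √(((√2+1)² − x)(x − (√2−1)²))/(2πx) · (α₁ + α₂/x²). Define m_k = ∫ x^k dη(x) and the free cumulants κ₂' = m₂ − m₁², κ₃' = m₃ − 3m₁m₂ + 2m₁³, κ₄' = m₄ − 4m₁m₃ − 2m₂² + 10m₁²m₂ − 5m₁⁴. Then the Hankel determinant κ₂'κ₄' − (κ₃')² is strictly negative; in particular there exist (α₁, α₂) ∈ (0,∞)² with α₁ + 2α₂ = 1 for which η_{α₁,α₂} is not freely infinitely divisible. -/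

import Mathlib

/-!
With `s(x) = √((b - x)(x - a))` and `J n = ∫ₐᵇ xⁿ s(x) dx`, the `k`-th moment of `η` is
`((1 - 2α₂) J (k - 1) + α₂ J (k - 3)) / 2π` for `a = (√2 - 1)²`, `b = (√2 + 1)²`.
Differentiating `xⁿ s(x)³`, which vanishes at both ends, gives the three-term recurrence
`(n + 3) J (n + 1) = (n + 3/2)(a + b) J n - n a b J (n - 1)`, and the substitution `x ↦ ab/x`,
which maps `[a, b]` onto itself, gives `J (-1) = √(ab) J (-2)`. Starting from the half-disc area
`J 0 = π (b - a)² / 8`, this yields `m₁, …, m₄ = 2 - 3α₂, 6 - 11α₂, 22 - 42α₂, 90 - 174α₂`, and the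
Hankel determinant becomes `α₂` times a quintic in `α₂` that is negative on `[0, 3/20]`.
-/

open MeasureTheory Set

/-- The probability measure `η_{α₁,α₂}` on `((√2-1)², (√2+1)²)` with density
`√(((√2+1)² - x)(x - (√2-1)²))/(2πx) · (α₁ + α₂/x²)`, where `α₁ = 1 - 2α₂`. -/
noncomputable def etaMeasure (α₂ : ℝ) : Measure ℝ :=
  MeasureTheory.volume.withDensity
    (fun x => ENNReal.ofReal
      ((Set.Ioo ((Real.sqrt 2 - 1) ^ 2) ((Real.sqrt 2 + 1) ^ 2)).indicator
        (fun x =>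
          Real.sqrt (((Real.sqrt 2 + 1) ^ 2 - x) * (x - (Real.sqrt 2 - 1) ^ 2)) /
              (2 * Real.pi * x) * ((1 - 2 * α₂) + α₂ / x ^ 2)) x))

open Real

noncomputable def profileMoment (a b : ℝ) (n : ℤ) : ℝ :=
  ∫ x in a..b, x ^ n * √((b - x) * (x - a))

section ProfileMoment

variable {a b : ℝ}

theorem integral_sqrt_sub_mul_sub (hab : a ≤ b) :
    ∫ x in a..b, √((b - x) * (x - a)) = π * (b - a) ^ 2 / 8 := by
  have hr : 0 ≤ (b - a) / 2 := by linarith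
  have h := intervalIntegral.smul_integral_comp_mul_add (a := -1) (b := 1)
    (fun x => √((b - x) * (x - a))) ((b - a) / 2) ((a + b) / 2)
  rw [show (b - a) / 2 * -1 + (a + b) / 2 = a by ring,
    show (b - a) / 2 * 1 + (a + b) / 2 = b by ring] at h
  rw [← h]
  have hint : ∀ x : ℝ,
      √((b - ((b - a) / 2 * x + (a + b) / 2)) * ((b - a) / 2 * x + (a + b) / 2 - a))
        = (b - a) / 2 * √(1 - x ^ 2) := by
    intro x
    rw [show (b - ((b - a) / 2 * x + (a + b) / 2)) * ((b - a) / 2 * x + (a + b) / 2 - a)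
        = ((b - a) / 2) ^ 2 * (1 - x ^ 2) by ring, Real.sqrt_mul (by positivity), Real.sqrt_sq hr]
  simp only [hint, intervalIntegral.integral_const_mul, integral_sqrt_one_sub_sq, smul_eq_mul]
  ring

theorem intervalIntegrable_zpow_mul_sqrt (ha : 0 < a) (hab : a ≤ b) (n : ℤ) :
    IntervalIntegrable (fun x => x ^ n * √((b - x) * (x - a))) volume a b := by
  apply ContinuousOn.intervalIntegrable
  rw [uIcc_of_le hab]
  exact (continuousOn_id.zpow₀ n fun x hx => Or.inl (ha.trans_le hx.1).ne').mul (by fun_prop)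

theorem hasDerivAt_zpow_mul_sqrt_pow_three {n : ℤ} {x : ℝ} (hx : x ≠ 0)
    (hP : 0 < (b - x) * (x - a)) :
    HasDerivAt (fun x => x ^ n * √((b - x) * (x - a)) ^ 3)
      ((n + 3 / 2) * (a + b) * (x ^ n * √((b - x) * (x - a)))
        - n * (a * b) * (x ^ (n - 1) * √((b - x) * (x - a)))
        - (n + 3) * (x ^ (n + 1) * √((b - x) * (x - a)))) x := by
  have hP' : HasDerivAt (fun x => (b - x) * (x - a)) (a + b - 2 * x) x := by
    refine (((hasDerivAt_id x).const_sub b).mul ((hasDerivAt_id x).sub_const a)).congr_deriv ?_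
    simp only [id]
    ring
  refine ((hasDerivAt_zpow n x (Or.inl hx)).mul ((hP'.sqrt hP.ne').pow 3)).congr_deriv ?_
  have hs := Real.sq_sqrt hP.le
  have hs0 := (Real.sqrt_pos.2 hP).ne'
  simp only [Pi.pow_apply]
  generalize √((b - x) * (x - a)) = S at *
  rw [zpow_sub_one₀ hx, zpow_add_one₀ hx]
  field_simp
  linear_combination 2 * n * S ^ 2 * hs

theorem profileMoment_recurrence (ha : 0 < a) (hab : a ≤ b) (n : ℤ) :
    (n + 3) * profileMoment a b (n + 1)
      = (n + 3 / 2) * (a + b) * profileMoment a b n - n * (a * b) * profileMoment a b (n - 1) := by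
  have hx : ∀ x ∈ Icc a b, x ≠ 0 := fun x hx => (ha.trans_le hx.1).ne'
  have hJ := intervalIntegrable_zpow_mul_sqrt ha hab
  have hJn := (hJ n).const_mul ((n + 3 / 2) * (a + b))
  have hJpred := (hJ (n - 1)).const_mul (n * (a * b))
  have hJsucc := (hJ (n + 1)).const_mul (n + 3)
  have hF := intervalIntegral.integral_eq_sub_of_hasDerivAt_of_le hab
    ((continuousOn_id.zpow₀ n fun x hx' => Or.inl (hx x hx')).mul (by fun_prop))
    (fun x hx' => hasDerivAt_zpow_mul_sqrt_pow_three (hx x (Ioo_subset_Icc_self hx'))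
      (mul_pos (sub_pos.2 hx'.2) (sub_pos.2 hx'.1)))
    ((hJn.sub hJpred).sub hJsucc)
  rw [intervalIntegral.integral_sub (hJn.sub hJpred) hJsucc,
    intervalIntegral.integral_sub hJn hJpred, intervalIntegral.integral_const_mul,
    intervalIntegral.integral_const_mul, intervalIntegral.integral_const_mul] at hF
  simp only [Pi.mul_apply, id, sub_self, zero_mul, Real.sqrt_zero, ne_eq, OfNat.ofNat_ne_zero,
    not_false_eq_true, zero_pow, mul_zero] at hF
  unfold profileMoment
  linarith

theorem sqrt_sub_mul_sub_mul_inv {x : ℝ} (hab : 0 ≤ a * b) (hx : 0 < x) :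
    √((b - a * b * x⁻¹) * (a * b * x⁻¹ - a)) = √(a * b) * √((b - x) * (x - a)) / x := by
  rw [show (b - a * b * x⁻¹) * (a * b * x⁻¹ - a) = a * b * ((b - x) * (x - a)) / x ^ 2 by
      field_simp,
    Real.sqrt_div' _ (sq_nonneg x), Real.sqrt_mul hab, Real.sqrt_sq hx.le]

theorem profileMoment_neg_one (ha : 0 < a) (hab : a ≤ b) :
    profileMoment a b (-1) = √(a * b) * profileMoment a b (-2) := by
  have hx : ∀ x ∈ uIcc a b, 0 < x := fun x hx =>
    ha.trans_le (by rw [uIcc_of_le hab] at hx; exact hx.1)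
  have hb : 0 < b := ha.trans_le hab
  have hab0 : 0 < a * b := mul_pos ha hb
  have hsub := intervalIntegral.integral_comp_mul_deriv' (a := a) (b := b)
    (f := fun x => a * b * x⁻¹) (f' := fun x => a * b * -(x ^ 2)⁻¹)
    (g := fun y => y ^ (-1 : ℤ) * √((b - y) * (y - a)))
    (fun x hx' => (hasDerivAt_inv (hx x hx').ne').const_mul (a * b))
    (continuousOn_const.mul
      ((continuousOn_pow 2).inv₀ fun x hx' => (pow_pos (hx x hx') 2).ne').neg)
    ((continuousOn_id.zpow₀ _ ?_).mul (by fun_prop))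
  rw [show a * b * a⁻¹ = b by field_simp, show a * b * b⁻¹ = a by field_simp,
    intervalIntegral.integral_congr
      (g := fun x => -√(a * b) * (x ^ (-2 : ℤ) * √((b - x) * (x - a)))) (fun x hx' => ?_),
    intervalIntegral.integral_const_mul, intervalIntegral.integral_symm a b] at hsub
  · unfold profileMoment; linarith
  · simp only [Function.comp_apply]
    have := (hx x hx').ne'
    rw [sqrt_sub_mul_sub_mul_inv hab0.le (hx x hx')]
    field_simp
  · rintro _ ⟨x, hx', rfl⟩
    exact Or.inl (mul_pos hab0 (inv_pos.2 (hx x hx'))).ne'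

end ProfileMoment

theorem integral_withDensity_ofReal_indicator_Ioo {a b : ℝ} (hab : a ≤ b) {f : ℝ → ℝ}
    (hf : Measurable f) (hf0 : ∀ x ∈ Ioo a b, 0 ≤ f x) (g : ℝ → ℝ) :
    ∫ x, g x ∂volume.withDensity (fun x => ENNReal.ofReal ((Ioo a b).indicator f x))
      = ∫ x in a..b, f x * g x := by
  rw [integral_withDensity_eq_integral_toReal_smul (hf.indicator measurableSet_Ioo).ennreal_ofReal
      (ae_of_all _ fun _ => ENNReal.ofReal_lt_top),
    intervalIntegral.integral_of_le hab, integral_Ioc_eq_integral_Ioo,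
    ← integral_indicator measurableSet_Ioo]
  congr 1
  funext x
  by_cases hx : x ∈ Ioo a b
  · simp [indicator_of_mem hx, ENNReal.toReal_ofReal (hf0 x hx)]
  · simp [indicator_of_notMem hx]

section EtaMeasure

local notation "a₀" => ((√2 - 1) ^ 2 : ℝ)
local notation "b₀" => ((√2 + 1) ^ 2 : ℝ)

theorem sqrt_two_sub_one_sq_pos : 0 < a₀ := by
  have : 1 < √2 := by rw [Real.lt_sqrt zero_le_one]; norm_num
  positivity

theorem sqrt_two_sub_one_sq_le_sqrt_two_add_one_sq : a₀ ≤ b₀ := by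
  nlinarith [Real.sqrt_nonneg 2]

theorem sqrt_two_sub_one_sq_add_sqrt_two_add_one_sq : a₀ + b₀ = 6 := by
  nlinarith [Real.sq_sqrt (zero_le_two : (0 : ℝ) ≤ 2)]

theorem sqrt_two_sub_one_sq_mul_sqrt_two_add_one_sq : a₀ * b₀ = 1 := by
  nlinarith [Real.sq_sqrt (zero_le_two : (0 : ℝ) ≤ 2)]

theorem profileMoment_sqrt_two_recurrence (n : ℤ) :
    (n + 3) * profileMoment a₀ b₀ (n + 1)
      = 6 * (n + 3 / 2) * profileMoment a₀ b₀ n - n * profileMoment a₀ b₀ (n - 1) := by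
  have h := profileMoment_recurrence sqrt_two_sub_one_sq_pos
    sqrt_two_sub_one_sq_le_sqrt_two_add_one_sq n
  rw [sqrt_two_sub_one_sq_add_sqrt_two_add_one_sq, sqrt_two_sub_one_sq_mul_sqrt_two_add_one_sq] at h
  linarith

theorem profileMoment_sqrt_two_neg_one_eq :
    profileMoment a₀ b₀ (-1) = profileMoment a₀ b₀ (-2) := by
  rw [profileMoment_neg_one sqrt_two_sub_one_sq_pos sqrt_two_sub_one_sq_le_sqrt_two_add_one_sq,
    sqrt_two_sub_one_sq_mul_sqrt_two_add_one_sq, Real.sqrt_one, one_mul]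

theorem profileMoment_sqrt_two_zero : profileMoment a₀ b₀ 0 = 4 * π := by
  have h32 : (b₀ - a₀) ^ 2 = 32 := by
    nlinarith [sqrt_two_sub_one_sq_add_sqrt_two_add_one_sq,
      sqrt_two_sub_one_sq_mul_sqrt_two_add_one_sq]
  simp only [profileMoment, zpow_zero, one_mul]
  rw [integral_sqrt_sub_mul_sub sqrt_two_sub_one_sq_le_sqrt_two_add_one_sq, h32]
  ring

theorem profileMoment_sqrt_two_neg_two : profileMoment a₀ b₀ (-2) = 2 * π := by
  have h := profileMoment_sqrt_two_recurrence (-1)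
  norm_num [profileMoment_sqrt_two_neg_one_eq, profileMoment_sqrt_two_zero] at h
  linarith

theorem profileMoment_sqrt_two_neg_one : profileMoment a₀ b₀ (-1) = 2 * π := by
  rw [profileMoment_sqrt_two_neg_one_eq, profileMoment_sqrt_two_neg_two]

theorem profileMoment_sqrt_two_one : profileMoment a₀ b₀ 1 = 12 * π := by
  have h := profileMoment_sqrt_two_recurrence 0
  norm_num [profileMoment_sqrt_two_zero] at h
  linarith

theorem profileMoment_sqrt_two_two : profileMoment a₀ b₀ 2 = 44 * π := by
  have h := profileMoment_sqrt_two_recurrence 1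
  norm_num [profileMoment_sqrt_two_zero, profileMoment_sqrt_two_one] at h
  linarith

theorem profileMoment_sqrt_two_three : profileMoment a₀ b₀ 3 = 180 * π := by
  have h := profileMoment_sqrt_two_recurrence 2
  norm_num [profileMoment_sqrt_two_one, profileMoment_sqrt_two_two] at h
  linarith

theorem integral_pow_etaMeasure {t : ℝ} (h0 : 0 ≤ t) (ht : t ≤ 1 / 2) (k : ℕ) :
    ∫ x, x ^ k ∂etaMeasure t
      = ((1 - 2 * t) * profileMoment a₀ b₀ (k - 1) + t * profileMoment a₀ b₀ (k - 3))
        / (2 * π) := by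
  have hab := sqrt_two_sub_one_sq_le_sqrt_two_add_one_sq
  have hx : ∀ x ∈ uIcc a₀ b₀, x ≠ 0 := fun x hx =>
    (sqrt_two_sub_one_sq_pos.trans_le (by rw [uIcc_of_le hab] at hx; exact hx.1)).ne'
  unfold etaMeasure
  rw [integral_withDensity_ofReal_indicator_Ioo hab (by fun_prop) ?_]
  · have hJ := intervalIntegrable_zpow_mul_sqrt sqrt_two_sub_one_sq_pos hab
    rw [intervalIntegral.integral_congr (g := fun x =>
          (1 - 2 * t) / (2 * π) * (x ^ ((k : ℤ) - 1) * √((b₀ - x) * (x - a₀)))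
            + t / (2 * π) * (x ^ ((k : ℤ) - 3) * √((b₀ - x) * (x - a₀))))
        (fun x hx' => ?_),
      intervalIntegral.integral_add ((hJ _).const_mul _) ((hJ _).const_mul _),
      intervalIntegral.integral_const_mul, intervalIntegral.integral_const_mul]
    · unfold profileMoment
      ring
    · have := hx x hx'
      simp only [zpow_sub₀ this, zpow_natCast, zpow_one]
      field_simp
  · intro x hx
    have := sqrt_two_sub_one_sq_pos.trans hx.1
    have : 0 ≤ 1 - 2 * t := by linarith
    positivity

theorem moments_etaMeasure {t : ℝ} (h0 : 0 ≤ t) (ht : t ≤ 1 / 2) :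
    ∫ x, x ∂etaMeasure t = 2 - 3 * t ∧ ∫ x, x ^ 2 ∂etaMeasure t = 6 - 11 * t ∧
      ∫ x, x ^ 3 ∂etaMeasure t = 22 - 42 * t ∧ ∫ x, x ^ 4 ∂etaMeasure t = 90 - 174 * t := by
  have hm := integral_pow_etaMeasure h0 ht
  have h₁ := hm 1
  simp only [pow_one] at h₁
  norm_num [h₁, hm, profileMoment_sqrt_two_neg_two, profileMoment_sqrt_two_neg_one,
    profileMoment_sqrt_two_zero, profileMoment_sqrt_two_one, profileMoment_sqrt_two_two,
    profileMoment_sqrt_two_three]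
  field_simp
  refine ⟨?_, ?_, ?_, ?_⟩ <;> ring

end EtaMeasure

theorem eta_hankel_quintic_neg {t : ℝ} (h0 : 0 ≤ t) (ht : t ≤ 3 / 20) :
    -2 - 12 * t + 232 * t ^ 2 - 459 * t ^ 3 - 243 * t ^ 4 + 729 * t ^ 5 < 0 := by
  have hquartic : t ^ 4 * (729 * t - 243) ≤ 0 :=
    mul_nonpos_of_nonneg_of_nonpos (by positivity) (by linarith)
  nlinarith [mul_nonneg h0 (sub_nonneg.2 ht), mul_nonneg (mul_nonneg h0 h0) (sub_nonneg.2 ht)]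

/-- For `α₂ ∈ (0, 3/20]` and `α₁ = 1 - 2α₂`, the Hankel determinant `κ₂'κ₄' - (κ₃')²`
of the free cumulants of `η` (computed from the moments via the moment-cumulant
formulas) is strictly negative; in particular such `η_{α₁,α₂}` is not freely
infinitely divisible. -/
theorem eta_hankel_neg (α₂ : ℝ) (h0 : 0 < α₂) (h320 : α₂ ≤ 3 / 20)
    (m₁ m₂ m₃ m₄ κ₂ κ₃ κ₄ : ℝ)
    (hm₁ : m₁ = ∫ x : ℝ, x ∂(etaMeasure α₂))
    (hm₂ : m₂ = ∫ x : ℝ, x ^ 2 ∂(etaMeasure α₂))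
    (hm₃ : m₃ = ∫ x : ℝ, x ^ 3 ∂(etaMeasure α₂))
    (hm₄ : m₄ = ∫ x : ℝ, x ^ 4 ∂(etaMeasure α₂))
    (hκ₂ : κ₂ = m₂ - m₁ ^ 2)
    (hκ₃ : κ₃ = m₃ - 3 * m₁ * m₂ + 2 * m₁ ^ 3)
    (hκ₄ : κ₄ = m₄ - 4 * m₁ * m₃ - 2 * m₂ ^ 2 + 10 * m₁ ^ 2 * m₂ - 5 * m₁ ^ 4) :
    κ₂ * κ₄ - κ₃ ^ 2 < 0 := by
  obtain ⟨e₁, e₂, e₃, e₄⟩ := moments_etaMeasure h0.le (by linarith)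
  have hankel : κ₂ * κ₄ - κ₃ ^ 2
      = α₂ * (-2 - 12 * α₂ + 232 * α₂ ^ 2 - 459 * α₂ ^ 3 - 243 * α₂ ^ 4 + 729 * α₂ ^ 5) := by
    rw [hκ₂, hκ₃, hκ₄, hm₁, hm₂, hm₃, hm₄, e₁, e₂, e₃, e₄]
    ring
  rw [hankel]
  exact mul_neg_of_pos_of_neg h0 (eta_hankel_quintic_neg h0.le h320)
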